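/- (Proposition 2(ii).) Let γ₁, γ₂, γ₃ ∈ ℂ and let n be a positive integer. With u_I = u_II := −n/2: (I) for E_I := −(iγ₁n + γ₂n² − iγ₃n³), one has, for all B ∈ ℂ, Φ(B, E_I, u_I) = −B(B − n − 1)·(iγ₁ + 2γ₂(B − 1) + iγ₃(n(2B − n − 2) − 4(B − 1)²))·(iγ₁ − 2γ₂(B − n) + iγ₃(3n(2B − n) − 4B²)); in particular Φ(0, E_I, u_I) = 0 = Φ(n+1, E_I, u_I). (II) For E_II := iγ₁(n + 2) − γ₂(n + 2)² − iγ₃(n + 2)³, one has, for all B ∈ ℂ, Φ(B, E_II, u_II) = −B(B − n − 1)·(iγ₁ − 2γ₂(B + 1) + iγ₃(n(2B − n − 2) − 4(B² + B + 1)))·(iγ₁ + 2γ₂(B − n − 2) + iγ₃(3(n + 2)(2B − n − 2) − 4B²)); in particular Φ(0, E_II, u_II) = 0 = Φ(n+1, E_II, u_II). -/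
import Mathlib


noncomputable section
open Complex

/-- `Φ₁(B,E,u) = (1/4)(E − 2iγ₁(B+u) + 4γ₂(B+u)² + 8iγ₃(B+u)³)`. -/
def Phi1 (γ₁ γ₂ γ₃ B E u : ℂ) : ℂ :=
  (1/4) * (E - 2*I*γ₁*(B + u) + 4*γ₂*(B + u)^2 + 8*I*γ₃*(B + u)^3)

/-- `Φ₂(B,E,u) = E + 2iγ₁(B+u−1) + 4γ₂(B+u−1)² − 8iγ₃(B+u−1)³`. -/
def Phi2 (γ₁ γ₂ γ₃ B E u : ℂ) : ℂ :=
  E + 2*I*γ₁*(B + u - 1) + 4*γ₂*(B + u - 1)^2 - 8*I*γ₃*(B + u - 1)^3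

/-- `Φ = Φ₁·Φ₂`, the structure function of the cubic quantum Zernike system. -/
def Phi (γ₁ γ₂ γ₃ B E u : ℂ) : ℂ := Phi1 γ₁ γ₂ γ₃ B E u * Phi2 γ₁ γ₂ γ₃ B E u

/-- Proposition 2(ii): Types I and II of the cubic system. -/
theorem prop2_types_I_II (γ₁ γ₂ γ₃ : ℂ) (n : ℕ) (hn : 1 ≤ n) :
    (∀ B : ℂ, Phi γ₁ γ₂ γ₃ B (-(I*γ₁*(n : ℂ) + γ₂*(n : ℂ)^2 - I*γ₃*(n : ℂ)^3)) (-(n : ℂ)/2)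
        = -B * (B - (n : ℂ) - 1)
          * (I*γ₁ + 2*γ₂*(B - 1) + I*γ₃*((n : ℂ)*(2*B - (n : ℂ) - 2) - 4*(B - 1)^2))
          * (I*γ₁ - 2*γ₂*(B - (n : ℂ)) + I*γ₃*(3*(n : ℂ)*(2*B - (n : ℂ)) - 4*B^2))) ∧
    Phi γ₁ γ₂ γ₃ 0 (-(I*γ₁*(n : ℂ) + γ₂*(n : ℂ)^2 - I*γ₃*(n : ℂ)^3)) (-(n : ℂ)/2) = 0 ∧
    Phi γ₁ γ₂ γ₃ ((n : ℂ) + 1)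
        (-(I*γ₁*(n : ℂ) + γ₂*(n : ℂ)^2 - I*γ₃*(n : ℂ)^3)) (-(n : ℂ)/2) = 0 ∧
    (∀ B : ℂ, Phi γ₁ γ₂ γ₃ B
          (I*γ₁*((n : ℂ) + 2) - γ₂*((n : ℂ) + 2)^2 - I*γ₃*((n : ℂ) + 2)^3) (-(n : ℂ)/2)
        = -B * (B - (n : ℂ) - 1)
          * (I*γ₁ - 2*γ₂*(B + 1) + I*γ₃*((n : ℂ)*(2*B - (n : ℂ) - 2) - 4*(B^2 + B + 1)))
          * (I*γ₁ + 2*γ₂*(B - (n : ℂ) - 2)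
              + I*γ₃*(3*((n : ℂ) + 2)*(2*B - (n : ℂ) - 2) - 4*B^2))) ∧
    Phi γ₁ γ₂ γ₃ 0
        (I*γ₁*((n : ℂ) + 2) - γ₂*((n : ℂ) + 2)^2 - I*γ₃*((n : ℂ) + 2)^3) (-(n : ℂ)/2) = 0 ∧
    Phi γ₁ γ₂ γ₃ ((n : ℂ) + 1)
        (I*γ₁*((n : ℂ) + 2) - γ₂*((n : ℂ) + 2)^2 - I*γ₃*((n : ℂ) + 2)^3) (-(n : ℂ)/2) = 0 := by

  have h1 : ∀ B : ℂ, Phi γ₁ γ₂ γ₃ B (-(I*γ₁*(n : ℂ) + γ₂*(n : ℂ)^2 - I*γ₃*(n : ℂ)^3)) (-(n : ℂ)/2)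
      = -B * (B - (n : ℂ) - 1)
        * (I*γ₁ + 2*γ₂*(B - 1) + I*γ₃*((n : ℂ)*(2*B - (n : ℂ) - 2) - 4*(B - 1)^2))
        * (I*γ₁ - 2*γ₂*(B - (n : ℂ)) + I*γ₃*(3*(n : ℂ)*(2*B - (n : ℂ)) - 4*B^2)) := by
    intro B
    simp only [Phi, Phi1, Phi2]
    ring_nf
  have h2 : ∀ B : ℂ, Phi γ₁ γ₂ γ₃ B
        (I*γ₁*((n : ℂ) + 2) - γ₂*((n : ℂ) + 2)^2 - I*γ₃*((n : ℂ) + 2)^3) (-(n : ℂ)/2)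
      = -B * (B - (n : ℂ) - 1)
        * (I*γ₁ - 2*γ₂*(B + 1) + I*γ₃*((n : ℂ)*(2*B - (n : ℂ) - 2) - 4*(B^2 + B + 1)))
        * (I*γ₁ + 2*γ₂*(B - (n : ℂ) - 2)
            + I*γ₃*(3*((n : ℂ) + 2)*(2*B - (n : ℂ) - 2) - 4*B^2)) := by
    intro B
    simp only [Phi, Phi1, Phi2]
    ring_nf
  refine ⟨h1, ?_, ?_, h2, ?_, ?_⟩
  · rw [h1]; ring
  · rw [h1]; ring
  · rw [h2]; ring
  · rw [h2]; ring
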